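/- Fix an initial state x ∈ ℝ^n, a disturbance bound μ₀ ≥ 0, and a horizon N. Then the effort metric under open-loop controllers satisfies: inf{ ε ≥ 0 : there exists a sequence u(0), …, u(N−1) ∈ ℝ^m with ‖u(i)‖∞ ≤ ε such that for every disturbance sequence d(0), …, d(N−1) with ‖d(i)‖∞ ≤ μ₀, the trajectory x(0) = x, x(k+1) = A_k x(k) + B_k u(k) + d(k) satisfies G_k x(k) ≤ H_k for all k = 0, …, N } = inf{ ε ≥ 0 : there exist ũ(0), …, ũ(N−1) ∈ ℝ^m with ‖ũ(i)‖∞ ≤ 1 and a nonnegative matrix P ∈ ℝ^{(N+1)q × 2n(N+1)} with P A_b = μ₀ E^{ol} and P B_b ≤ F^{ol}(x, ũ, ε) }. -/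

import Mathlib

open Matrix Finset

noncomputable section

/-- Ordered product `M (k-1) * M (k-2) * ⋯ * M i` (empty product = identity when `k ≤ i`). -/
def mprod {n : ℕ} (M : ℕ → Matrix (Fin n) (Fin n) ℝ) (i k : ℕ) :
    Matrix (Fin n) (Fin n) ℝ :=
  (((List.range' i (k - i)).reverse).map M).prod

def Abar {n m : ℕ} (A : ℕ → Matrix (Fin n) (Fin n) ℝ) (B : ℕ → Matrix (Fin n) (Fin m) ℝ)
    (α₁ : Matrix (Fin m) (Fin n) ℝ) (j : ℕ) : Matrix (Fin n) (Fin n) ℝ :=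
  A j + B j * α₁

def trajCL {n m : ℕ} (A : ℕ → Matrix (Fin n) (Fin n) ℝ) (B : ℕ → Matrix (Fin n) (Fin m) ℝ)
    (α₁ : Matrix (Fin m) (Fin n) ℝ) (α₂ : Fin m → ℝ) (d : ℕ → Fin n → ℝ)
    (x0 : Fin n → ℝ) : ℕ → Fin n → ℝ
  | 0 => x0
  | k + 1 =>
      (A k).mulVec (trajCL A B α₁ α₂ d x0 k)
        + (B k).mulVec (α₁.mulVec (trajCL A B α₁ α₂ d x0 k) + α₂) + d k

def Eblk {n : ℕ} (N : ℕ) (M : ℕ → Matrix (Fin n) (Fin n) ℝ) (k : ℕ) :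
    Matrix (Fin n) (Fin (N + 1) × Fin n) ℝ :=
  Matrix.of fun r jc =>
    if 1 ≤ (jc.1 : ℕ) ∧ (jc.1 : ℕ) ≤ k then mprod M (jc.1 : ℕ) k r jc.2 else 0

def Fblk {n m : ℕ} (A : ℕ → Matrix (Fin n) (Fin n) ℝ) (B : ℕ → Matrix (Fin n) (Fin m) ℝ)
    (α₁ : Matrix (Fin m) (Fin n) ℝ) (α₂ : Fin m → ℝ) (x : Fin n → ℝ) (k : ℕ) : Fin n → ℝ :=
  (mprod (Abar A B α₁) 0 k).mulVec x
    + ∑ i ∈ Finset.range k, (mprod (Abar A B α₁) (i + 1) k * B i).mulVec α₂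

def Ex {n m q : ℕ} (N : ℕ) (A : ℕ → Matrix (Fin n) (Fin n) ℝ)
    (B : ℕ → Matrix (Fin n) (Fin m) ℝ) (G : ℕ → Matrix (Fin q) (Fin n) ℝ)
    (α₁ : Matrix (Fin m) (Fin n) ℝ) :
    Matrix (Fin (N + 1) × Fin q) (Fin (N + 1) × Fin n) ℝ :=
  Matrix.of fun kr jc => (G (kr.1 : ℕ) * Eblk N (Abar A B α₁) (kr.1 : ℕ)) kr.2 jc

def Fx {n m q : ℕ} (N : ℕ) (A : ℕ → Matrix (Fin n) (Fin n) ℝ)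
    (B : ℕ → Matrix (Fin n) (Fin m) ℝ) (G : ℕ → Matrix (Fin q) (Fin n) ℝ)
    (H : ℕ → Fin q → ℝ) (α₁ : Matrix (Fin m) (Fin n) ℝ) (α₂ : Fin m → ℝ)
    (x : Fin n → ℝ) : Fin (N + 1) × Fin q → ℝ :=
  fun kr => H (kr.1 : ℕ) kr.2 - (G (kr.1 : ℕ)).mulVec (Fblk A B α₁ α₂ x (kr.1 : ℕ)) kr.2

def Au (m : ℕ) : Matrix (Fin m ⊕ Fin m) (Fin m) ℝ := Matrix.fromRows 1 (-1)

def Sk {n m : ℕ} (A : ℕ → Matrix (Fin n) (Fin n) ℝ) (B : ℕ → Matrix (Fin n) (Fin m) ℝ)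
    (α₁ : Matrix (Fin m) (Fin n) ℝ) (α₂ : Fin m → ℝ) (x : Fin n → ℝ) (k : ℕ) : Fin m → ℝ :=
  α₁.mulVec (Fblk A B α₁ α₂ x k) + α₂

def Ecl {n m q : ℕ} (N : ℕ) (A : ℕ → Matrix (Fin n) (Fin n) ℝ)
    (B : ℕ → Matrix (Fin n) (Fin m) ℝ) (G : ℕ → Matrix (Fin q) (Fin n) ℝ)
    (α₁ : Matrix (Fin m) (Fin n) ℝ) :
    Matrix ((Fin (N + 1) × Fin q) ⊕ (Fin N × (Fin m ⊕ Fin m))) (Fin (N + 1) × Fin n) ℝ :=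
  Matrix.fromRows (Ex N A B G α₁)
    (Matrix.of fun kr jc => (Au m * α₁ * Eblk N (Abar A B α₁) (kr.1 : ℕ)) kr.2 jc)

def Fcl {n m q : ℕ} (N : ℕ) (A : ℕ → Matrix (Fin n) (Fin n) ℝ)
    (B : ℕ → Matrix (Fin n) (Fin m) ℝ) (G : ℕ → Matrix (Fin q) (Fin n) ℝ)
    (H : ℕ → Fin q → ℝ) (α₁ : Matrix (Fin m) (Fin n) ℝ) (α₂ : Fin m → ℝ)
    (x : Fin n → ℝ) (ε : ℝ) : (Fin (N + 1) × Fin q) ⊕ (Fin N × (Fin m ⊕ Fin m)) → ℝ :=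
  Sum.elim (Fx N A B G H α₁ α₂ x)
    (fun kr => ε - (Au m).mulVec (Sk A B α₁ α₂ x (kr.1 : ℕ)) kr.2)

def AbM (N n : ℕ) :
    Matrix ((Fin (N + 1) × Fin n) ⊕ (Fin (N + 1) × Fin n)) (Fin (N + 1) × Fin n) ℝ :=
  Matrix.fromRows 1 (-1)

def BbV (N n : ℕ) : (Fin (N + 1) × Fin n) ⊕ (Fin (N + 1) × Fin n) → ℝ := fun _ => 1

def trajOL {n m : ℕ} (A : ℕ → Matrix (Fin n) (Fin n) ℝ) (B : ℕ → Matrix (Fin n) (Fin m) ℝ)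
    (u : ℕ → Fin m → ℝ) (d : ℕ → Fin n → ℝ) (x0 : Fin n → ℝ) : ℕ → Fin n → ℝ
  | 0 => x0
  | k + 1 => (A k).mulVec (trajOL A B u d x0 k) + (B k).mulVec (u k) + d k

def Eol {n q : ℕ} (N : ℕ) (A : ℕ → Matrix (Fin n) (Fin n) ℝ)
    (G : ℕ → Matrix (Fin q) (Fin n) ℝ) :
    Matrix (Fin (N + 1) × Fin q) (Fin (N + 1) × Fin n) ℝ :=
  Matrix.of fun kr jc => (G (kr.1 : ℕ) * Eblk N A (kr.1 : ℕ)) kr.2 jc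

def Fol {n m q : ℕ} (N : ℕ) (A : ℕ → Matrix (Fin n) (Fin n) ℝ)
    (B : ℕ → Matrix (Fin n) (Fin m) ℝ) (G : ℕ → Matrix (Fin q) (Fin n) ℝ)
    (H : ℕ → Fin q → ℝ) (x : Fin n → ℝ) (ut : ℕ → Fin m → ℝ) (ε : ℝ) :
    Fin (N + 1) × Fin q → ℝ :=
  fun kr => H (kr.1 : ℕ) kr.2
    - (G (kr.1 : ℕ)).mulVec ((mprod A 0 (kr.1 : ℕ)).mulVec x) kr.2
    - ε * (G (kr.1 : ℕ)).mulVec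
        (∑ i ∈ Finset.range (kr.1 : ℕ), (mprod A (i + 1) (kr.1 : ℕ) * B i).mulVec (ut i)) kr.2

/-!
The two sets of admissible `ε` coincide. By superposition the trajectory is the
disturbance-free one plus a linear image of the stacked disturbance, and the rows of that
image, after `G_k`, are the rows of `E^{ol}`. So an input sequence is robustly feasible iff in
every constraint row the worst case over the box `‖d(i)‖∞ ≤ μ₀`, which is `μ₀` times the `ℓ¹`
norm of the row, fits into the nominal slack. By LP duality for the box (split the row into its
positive and negative parts) this is the existence of the certificate `P`, and for `u = ε ũ`
the nominal slack is `F^{ol}(x, ũ, ε)`.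
-/

section BoxDuality

variable {ι κ : Type*} [Fintype κ]

lemma dotProduct_le_mul_sum_abs (e v : κ → ℝ) {μ : ℝ} (hv : ∀ j, |v j| ≤ μ) :
    e ⬝ᵥ v ≤ μ * ∑ j, |e j| := by
  rw [Finset.mul_sum]
  refine Finset.sum_le_sum fun j _ => ?_
  calc e j * v j ≤ |e j| * |v j| := by rw [← abs_mul]; exact le_abs_self _
    _ ≤ μ * |e j| := by rw [mul_comm μ]; exact mul_le_mul_of_nonneg_left (hv j) (abs_nonneg _)

lemma forall_abs_le_dotProduct_le_iff (e : κ → ℝ) (f : ℝ) {μ : ℝ} (hμ : 0 ≤ μ) :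
    (∀ v : κ → ℝ, (∀ j, |v j| ≤ μ) → e ⬝ᵥ v ≤ f) ↔ μ * ∑ j, |e j| ≤ f := by
  refine ⟨fun h => ?_, fun h v hv => (dotProduct_le_mul_sum_abs e v hv).trans h⟩
  let v : κ → ℝ := fun j => if 0 ≤ e j then μ else -μ
  have hv : ∀ j, |v j| ≤ μ := fun j => by unfold v; split_ifs <;> simp [abs_of_nonneg hμ]
  have hval : e ⬝ᵥ v = μ * ∑ j, |e j| := by
    rw [Finset.mul_sum]
    refine Finset.sum_congr rfl fun j _ => ?_
    unfold v
    split_ifs with hj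
    · rw [abs_of_nonneg hj, mul_comm]
    · rw [abs_of_neg (not_le.mp hj)]; ring
  exact hval ▸ h v hv

lemma mulVec_const_one_apply (P : Matrix ι (κ ⊕ κ) ℝ) (i : ι) :
    (P *ᵥ fun _ => 1) i = ∑ j, (P i (Sum.inl j) + P i (Sum.inr j)) := by
  simp [Matrix.mulVec, dotProduct, Fintype.sum_sum_type, Finset.sum_add_distrib]

variable [DecidableEq κ]

lemma mul_fromRows_one_neg_apply (P : Matrix ι (κ ⊕ κ) ℝ) (i : ι) (j : κ) :
    (P * (Matrix.fromRows 1 (-1) : Matrix (κ ⊕ κ) κ ℝ)) i j =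
      P i (Sum.inl j) - P i (Sum.inr j) := by
  rw [Matrix.mul_apply, Fintype.sum_sum_type]
  simp [Matrix.one_apply, sub_eq_add_neg]

/-- LP duality for the box `A_b w ≤ B_b` with `A_b = [I; -I]`, `B_b = 𝟙`. -/
lemma exists_nonneg_mul_fromRows_one_neg_iff (E : Matrix ι κ ℝ) (F : ι → ℝ) {μ : ℝ}
    (hμ : 0 ≤ μ) :
    (∃ P : Matrix ι (κ ⊕ κ) ℝ, (∀ i j, 0 ≤ P i j) ∧
        P * (Matrix.fromRows 1 (-1) : Matrix (κ ⊕ κ) κ ℝ) = μ • E ∧ P *ᵥ (fun _ => 1) ≤ F) ↔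
      ∀ i, μ * ∑ j, |E i j| ≤ F i := by
  constructor
  · rintro ⟨P, hP, hPE, hPF⟩ i
    calc μ * ∑ j, |E i j| = ∑ j, |P i (Sum.inl j) - P i (Sum.inr j)| := by
          simp_rw [Finset.mul_sum, ← mul_fromRows_one_neg_apply, hPE, Matrix.smul_apply,
            smul_eq_mul, abs_mul, abs_of_nonneg hμ]
      _ ≤ ∑ j, (P i (Sum.inl j) + P i (Sum.inr j)) :=
          Finset.sum_le_sum fun j _ => (abs_sub _ _).trans <| by
            rw [abs_of_nonneg (hP _ _), abs_of_nonneg (hP _ _)]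
      _ ≤ F i := mulVec_const_one_apply P i ▸ hPF i
  · intro h
    refine ⟨Matrix.fromCols (Matrix.of fun i j => (μ * E i j)⁺)
      (Matrix.of fun i j => (μ * E i j)⁻), ?_, ?_, fun i => ?_⟩
    · rintro i (j | j)
      exacts [posPart_nonneg _, negPart_nonneg _]
    · ext i j
      rw [mul_fromRows_one_neg_apply]
      simp
    · simpa [mulVec_const_one_apply, posPart_add_negPart, abs_mul, abs_of_nonneg hμ,
        Finset.mul_sum] using h i

end BoxDuality

section Trajectory

variable {n m : ℕ}

lemma mprod_of_le (M : ℕ → Matrix (Fin n) (Fin n) ℝ) {i k : ℕ} (h : k ≤ i) :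
    mprod M i k = 1 := by
  simp [mprod, Nat.sub_eq_zero_of_le h]

lemma mprod_succ (M : ℕ → Matrix (Fin n) (Fin n) ℝ) {i k : ℕ} (h : i ≤ k) :
    mprod M i (k + 1) = M k * mprod M i k := by
  have hlen : k + 1 - i = k - i + 1 := by omega
  simp [mprod, hlen, List.range'_concat, Nat.add_sub_cancel' h]

lemma trajOL_eq_sum (A : ℕ → Matrix (Fin n) (Fin n) ℝ) (B : ℕ → Matrix (Fin n) (Fin m) ℝ)
    (u : ℕ → Fin m → ℝ) (d : ℕ → Fin n → ℝ) (x : Fin n → ℝ) (k : ℕ) :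
    trajOL A B u d x k =
      mprod A 0 k *ᵥ x + ∑ i ∈ range k, mprod A (i + 1) k *ᵥ (B i *ᵥ u i + d i) := by
  induction k with
  | zero => simp [trajOL, mprod_of_le]
  | succ k ih =>
    have hstep : ∀ i ∈ range k, mprod A (i + 1) (k + 1) *ᵥ (B i *ᵥ u i + d i) =
        A k *ᵥ (mprod A (i + 1) k *ᵥ (B i *ᵥ u i + d i)) := fun i hi => by
      rw [mprod_succ A (mem_range.mp hi), mulVec_mulVec]
    rw [trajOL, ih, sum_range_succ, mprod_of_le A le_rfl, one_mulVec, sum_congr rfl hstep,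
      mprod_succ A k.zero_le, mulVec_add, mulVec_sum, mulVec_mulVec]
    abel

lemma trajOL_eq_nominal_add (A : ℕ → Matrix (Fin n) (Fin n) ℝ)
    (B : ℕ → Matrix (Fin n) (Fin m) ℝ) (u : ℕ → Fin m → ℝ) (d : ℕ → Fin n → ℝ)
    (x : Fin n → ℝ) (k : ℕ) :
    trajOL A B u d x k = trajOL A B u 0 x k + ∑ i ∈ range k, mprod A (i + 1) k *ᵥ d i := by
  simp only [trajOL_eq_sum, mulVec_add, sum_add_distrib, Pi.zero_apply, add_zero, add_assoc]

lemma trajOL_congr_input (A : ℕ → Matrix (Fin n) (Fin n) ℝ)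
    (B : ℕ → Matrix (Fin n) (Fin m) ℝ) {u v : ℕ → Fin m → ℝ} (d : ℕ → Fin n → ℝ)
    (x : Fin n → ℝ) {k : ℕ} (huv : ∀ i < k, u i = v i) :
    trajOL A B u d x k = trajOL A B v d x k := by
  simp only [trajOL_eq_sum]
  congr 1
  exact sum_congr rfl fun i hi => by rw [huv i (mem_range.mp hi)]

lemma trajOL_zero_smul_eq (A : ℕ → Matrix (Fin n) (Fin n) ℝ)
    (B : ℕ → Matrix (Fin n) (Fin m) ℝ) (ut : ℕ → Fin m → ℝ) (ε : ℝ) (x : Fin n → ℝ) (k : ℕ) :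
    trajOL A B (fun i => ε • ut i) 0 x k =
      mprod A 0 k *ᵥ x + ε • ∑ i ∈ range k, (mprod A (i + 1) k * B i) *ᵥ ut i := by
  simp only [trajOL_eq_sum, Pi.zero_apply, add_zero, smul_sum, mulVec_smul, mulVec_mulVec]

end Trajectory

section Disturbance

variable {n N : ℕ}

/-- Stacked disturbance: block column `j ≥ 1` holds `d (j - 1)`, and block column `0`, which
`Eblk` multiplies by zero, holds `0`. -/
def stackDist (N : ℕ) (d : ℕ → Fin n → ℝ) : Fin (N + 1) × Fin n → ℝ :=
  fun jc => if (jc.1 : ℕ) = 0 then 0 else d (jc.1 - 1) jc.2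

def unstackDist (v : Fin (N + 1) × Fin n → ℝ) : ℕ → Fin n → ℝ :=
  fun i c => if h : i < N then v (⟨i + 1, by omega⟩, c) else 0

lemma sum_range_ite_lt {M : Type*} [AddCommMonoid M] (f : ℕ → M) {k N : ℕ} (hk : k ≤ N) :
    ∑ i ∈ range N, (if i < k then f i else 0) = ∑ i ∈ range k, f i := by
  rw [← sum_range_add_sum_Ico _ hk, sum_congr rfl fun i hi => if_pos (mem_range.mp hi),
    sum_congr rfl fun i hi => if_neg (not_lt.mpr (mem_Ico.mp hi).1), sum_const_zero, add_zero]

lemma Eblk_mulVec_stackDist (M : ℕ → Matrix (Fin n) (Fin n) ℝ) (d : ℕ → Fin n → ℝ) {k : ℕ}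
    (hk : k ≤ N) :
    Eblk N M k *ᵥ stackDist N d = ∑ i ∈ range k, mprod M (i + 1) k *ᵥ d i := by
  ext r
  calc (Eblk N M k *ᵥ stackDist N d) r
      = ∑ i : Fin N, if (i : ℕ) < k then ∑ c, mprod M (i + 1) k r c * d i c else 0 := by
        simp only [mulVec, dotProduct, Fintype.sum_prod_type, Fin.sum_univ_succ]
        simp [Eblk, stackDist, Nat.succ_le_iff, ite_mul, sum_ite_irrel]
    _ = ∑ i ∈ range N, if i < k then ∑ c, mprod M (i + 1) k r c * d i c else 0 :=
        Fin.sum_univ_eq_sum_range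
          (fun i => if i < k then ∑ c, mprod M (i + 1) k r c * d i c else 0) N
    _ = (∑ i ∈ range k, mprod M (i + 1) k *ᵥ d i) r := by
        rw [sum_range_ite_lt _ hk, Finset.sum_apply]
        rfl

lemma Eol_dotProduct {q : ℕ} (A : ℕ → Matrix (Fin n) (Fin n) ℝ)
    (G : ℕ → Matrix (Fin q) (Fin n) ℝ) (r : Fin (N + 1) × Fin q) (v : Fin (N + 1) × Fin n → ℝ) :
    Eol N A G r ⬝ᵥ v = (G r.1 *ᵥ (Eblk N A r.1 *ᵥ v)) r.2 := by
  rw [mulVec_mulVec]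
  rfl

lemma Eol_dotProduct_stackDist_unstackDist {q : ℕ} (A : ℕ → Matrix (Fin n) (Fin n) ℝ)
    (G : ℕ → Matrix (Fin q) (Fin n) ℝ) (r : Fin (N + 1) × Fin q) (v : Fin (N + 1) × Fin n → ℝ) :
    Eol N A G r ⬝ᵥ stackDist N (unstackDist v) = Eol N A G r ⬝ᵥ v := by
  refine sum_congr rfl fun ⟨j, c⟩ _ => ?_
  by_cases hj : (j : ℕ) = 0
  · have hE : Eol N A G r (j, c) = 0 := by simp [Eol, Eblk, Matrix.mul_apply, hj]
    rw [hE, zero_mul, zero_mul]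
  · have : (⟨j - 1 + 1, by omega⟩ : Fin (N + 1)) = j := Fin.ext (by rw [Fin.val_mk]; omega)
    simp [stackDist, unstackDist, hj, this, show (j : ℕ) - 1 < N by omega]

lemma abs_stackDist_le {μ : ℝ} (hμ : 0 ≤ μ) {d : ℕ → Fin n → ℝ} (hd : ∀ i < N, ‖d i‖ ≤ μ)
    (jc : Fin (N + 1) × Fin n) : |stackDist N d jc| ≤ μ := by
  unfold stackDist
  split_ifs with hj
  · simpa using hμ
  · exact (norm_le_pi_norm (d _) jc.2).trans (hd _ (by omega))

lemma norm_unstackDist_le {μ : ℝ} (hμ : 0 ≤ μ) {v : Fin (N + 1) × Fin n → ℝ}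
    (hv : ∀ jc, |v jc| ≤ μ) (i : ℕ) : ‖unstackDist v i‖ ≤ μ := by
  refine (pi_norm_le_iff_of_nonneg hμ).mpr fun c => ?_
  unfold unstackDist
  split_ifs
  · exact hv _
  · simpa using hμ

end Disturbance

lemma exists_norm_le_iff_exists_smul_norm_le_one {E : Type*} [NormedAddCommGroup E]
    [NormedSpace ℝ E] {ε : ℝ} (hε : 0 ≤ ε) {N : ℕ} {Q : (ℕ → E) → Prop}
    (hQ : ∀ u v, (∀ i < N, u i = v i) → Q u → Q v) :
    (∃ u : ℕ → E, (∀ i < N, ‖u i‖ ≤ ε) ∧ Q u) ↔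
      ∃ ut : ℕ → E, (∀ i < N, ‖ut i‖ ≤ 1) ∧ Q fun i => ε • ut i := by
  constructor
  · rintro ⟨u, hu, hQu⟩
    refine ⟨fun i => ε⁻¹ • u i, fun i hi => ?_, hQ u _ (fun i hi => ?_) hQu⟩
    · rw [norm_smul, norm_inv, Real.norm_of_nonneg hε]
      exact inv_mul_le_one_of_le₀ (hu i hi) hε
    · rcases hε.eq_or_lt with rfl | hpos
      · simpa using hu i hi
      · rw [smul_inv_smul₀ hpos.ne']
  · rintro ⟨ut, hut, hQut⟩
    refine ⟨_, fun i hi => ?_, hQut⟩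
    rw [norm_smul, Real.norm_of_nonneg hε]
    exact mul_le_of_le_one_right hε (hut i hi)

section Robust

variable {n m q N : ℕ} (A : ℕ → Matrix (Fin n) (Fin n) ℝ) (B : ℕ → Matrix (Fin n) (Fin m) ℝ)
  (G : ℕ → Matrix (Fin q) (Fin n) ℝ) (H : ℕ → Fin q → ℝ) (x : Fin n → ℝ)

def nominalSlack (N : ℕ) (u : ℕ → Fin m → ℝ) (r : Fin (N + 1) × Fin q) : ℝ :=
  H r.1 r.2 - (G r.1 *ᵥ trajOL A B u 0 x r.1) r.2

lemma nominalSlack_congr {u v : ℕ → Fin m → ℝ} (huv : ∀ i < N, u i = v i) :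
    nominalSlack A B G H x N u = nominalSlack A B G H x N v := by
  funext r
  rw [nominalSlack, nominalSlack,
    trajOL_congr_input A B 0 x fun i hi => huv i (hi.trans_le r.1.is_le)]

lemma Fol_eq_nominalSlack (ut : ℕ → Fin m → ℝ) (ε : ℝ) :
    Fol N A B G H x ut ε = nominalSlack A B G H x N fun i => ε • ut i := by
  funext r
  rw [nominalSlack, trajOL_zero_smul_eq, mulVec_add, mulVec_smul, Fol]
  simp only [Pi.add_apply, Pi.smul_apply, smul_eq_mul]
  ring

lemma mulVec_trajOL_apply (u : ℕ → Fin m → ℝ) (d : ℕ → Fin n → ℝ) (r : Fin (N + 1) × Fin q) :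
    (G r.1 *ᵥ trajOL A B u d x r.1) r.2 =
      (G r.1 *ᵥ trajOL A B u 0 x r.1) r.2 + Eol N A G r ⬝ᵥ stackDist N d := by
  rw [trajOL_eq_nominal_add, mulVec_add, Pi.add_apply, Eol_dotProduct,
    Eblk_mulVec_stackDist A d r.1.is_le]

lemma forall_bounded_disturbance_iff {μ₀ : ℝ} (hμ₀ : 0 ≤ μ₀) (u : ℕ → Fin m → ℝ) :
    (∀ d : ℕ → Fin n → ℝ, (∀ i < N, ‖d i‖ ≤ μ₀) →
        ∀ k ≤ N, G k *ᵥ trajOL A B u d x k ≤ H k) ↔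
      ∀ r, μ₀ * ∑ j, |Eol N A G r j| ≤ nominalSlack A B G H x N u r := by
  simp_rw [← forall_abs_le_dotProduct_le_iff _ _ hμ₀]
  constructor
  · intro h r v hv
    have hr := h (unstackDist v) (fun i _ => norm_unstackDist_le hμ₀ hv i) r.1 r.1.is_le r.2
    rw [mulVec_trajOL_apply, Eol_dotProduct_stackDist_unstackDist] at hr
    rw [nominalSlack]
    linarith
  · intro h d hd k hk ρ
    have hr := h (⟨k, Nat.lt_succ_of_le hk⟩, ρ) (stackDist N d) (abs_stackDist_le hμ₀ hd)
    have htraj := mulVec_trajOL_apply A B G x u d (⟨k, Nat.lt_succ_of_le hk⟩, ρ)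
    rw [nominalSlack] at hr
    dsimp only at hr htraj
    linarith

end Robust

/-- Effort metric under open-loop controllers, with disturbance bound `μ₀`: the infimum
of admissible input bounds `ε` in the robust formulation (over input sequences `u` with
`‖u(i)‖∞ ≤ ε`) equals the infimum in the Farkas-certified formulation (over normalized
inputs `ũ` with `‖ũ(i)‖∞ ≤ 1`, applied inputs `u(i) = ε ũ(i)`). -/
theorem effort_openLoop {n m q N : ℕ}
    (A : ℕ → Matrix (Fin n) (Fin n) ℝ) (B : ℕ → Matrix (Fin n) (Fin m) ℝ)
    (G : ℕ → Matrix (Fin q) (Fin n) ℝ) (H : ℕ → Fin q → ℝ)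
    (x : Fin n → ℝ) (μ₀ : ℝ) (hμ₀ : 0 ≤ μ₀) :
    sInf {ε : ℝ | 0 ≤ ε ∧ ∃ u : ℕ → Fin m → ℝ,
        (∀ i, i < N → ‖u i‖ ≤ ε) ∧
        ∀ d : ℕ → Fin n → ℝ, (∀ i, i < N → ‖d i‖ ≤ μ₀) →
          ∀ k, k ≤ N → (G k).mulVec (trajOL A B u d x k) ≤ H k} =
    sInf {ε : ℝ | 0 ≤ ε ∧ ∃ (ut : ℕ → Fin m → ℝ)
        (P : Matrix (Fin (N + 1) × Fin q)
          ((Fin (N + 1) × Fin n) ⊕ (Fin (N + 1) × Fin n)) ℝ),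
        (∀ i, i < N → ‖ut i‖ ≤ 1) ∧
        (∀ i j, 0 ≤ P i j) ∧
        P * AbM N n = μ₀ • Eol N A G ∧
        P.mulVec (BbV N n) ≤ Fol N A B G H x ut ε} := by
  congr 1
  ext ε
  refine and_congr_right fun hε => ?_
  simp_rw [forall_bounded_disturbance_iff A B G H x hμ₀]
  rw [exists_norm_le_iff_exists_smul_norm_le_one hε fun u v huv h =>
    nominalSlack_congr A B G H x huv ▸ h]
  refine exists_congr fun ut => ?_
  rw [exists_and_left, Fol_eq_nominalSlack,
    ← exists_nonneg_mul_fromRows_one_neg_iff (Eol N A G) _ hμ₀]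
  rfl
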